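/- Every smooth closed 1-form on a smoothly contractible open subset U of ℝⁿ is exact (Poincaré lemma). -/

import Mathlib

set_option synthInstance.maxHeartbeats 1000000
set_option maxHeartbeats 1000000

open Set MeasureTheory Filter
open scoped Topology ENNReal NNReal

namespace PoincareAux

variable {E : Type*} [NormedAddCommGroup E] [NormedSpace ℝ E]

/-- Construction of a primitive of a closed 1-form via a smooth contraction. -/
theorem exists_primitive {E : Type*} [NormedAddCommGroup E] [NormedSpace ℝ E] [ProperSpace E]
    {U : Set E} (hU : IsOpen U) {om : E → E →L[ℝ] ℝ} (hom : ContDiffOn ℝ 2 om U)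
    {x₀ : E} {H : ℝ × E → E} (hx₀ : x₀ ∈ U) (hH : ContDiffOn ℝ 3 H (Set.univ ×ˢ U))
    (hHmaps : ∀ t x, x ∈ U → H (t, x) ∈ U)
    (hH0 : ∀ x ∈ U, H (0, x) = x) (hH1 : ∀ x ∈ U, H (1, x) = x₀)
    (hclosed : ∀ x ∈ U, ∀ u v, fderiv ℝ om x u v = fderiv ℝ om x v u) :
    ∃ f : E → ℝ, ∀ x ∈ U, HasFDerivAt f (om x) x := by
  classical
  set V : Set (ℝ × E) := Set.univ ×ˢ U with hVdef
  have hVopen : IsOpen V := isOpen_univ.prod hU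
  have hVmem : ∀ (t : ℝ) {x : E}, x ∈ U → (t, x) ∈ V := fun t x hx => ⟨trivial, hx⟩
  have hHU : ∀ p ∈ V, H p ∈ U := fun p hp => hHmaps p.1 p.2 hp.2
  -- the various derivatives
  set K : ℝ × E → (ℝ × E →L[ℝ] E) := fderiv ℝ H with hKdef
  have hKc : ContDiffOn ℝ 2 K V := hH.fderiv_of_isOpen hVopen (by norm_num)
  set A : ℝ × E → (E →L[ℝ] ℝ) := fun p => om (H p) with hAdef
  have hAc : ContDiffOn ℝ 2 A V := hom.comp (hH.of_le (by norm_num)) hHU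
  set g : ℝ × E → ℝ := fun p => A p (K p (1, 0)) with hgdef
  have hgc : ContDiffOn ℝ 2 g V := hAc.clm_apply (hKc.clm_apply contDiffOn_const)
  set G' : ℝ × E → (E →L[ℝ] ℝ) :=
    fun p => (fderiv ℝ g p).comp (ContinuousLinearMap.inr ℝ ℝ E) with hG'def
  have hG'c : ContDiffOn ℝ 1 G' V :=
    (hgc.fderiv_of_isOpen hVopen (by norm_num)).clm_comp contDiffOn_const
  -- pointwise differentiability
  have hHd : ∀ p ∈ V, HasFDerivAt H (K p) p := fun p hp =>
    ((hH.contDiffAt (hVopen.mem_nhds hp)).differentiableAt (by norm_num)).hasFDerivAt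
  have hKd : ∀ p ∈ V, HasFDerivAt K (fderiv ℝ K p) p := fun p hp =>
    ((hKc.contDiffAt (hVopen.mem_nhds hp)).differentiableAt (by norm_num)).hasFDerivAt
  have homd : ∀ z ∈ U, HasFDerivAt om (fderiv ℝ om z) z := fun z hz =>
    ((hom.contDiffAt (hU.mem_nhds hz)).differentiableAt (by norm_num)).hasFDerivAt
  have hgd : ∀ p ∈ V, HasFDerivAt g (fderiv ℝ g p) p := fun p hp =>
    ((hgc.contDiffAt (hVopen.mem_nhds hp)).differentiableAt (by norm_num)).hasFDerivAt
  have hAd : ∀ p ∈ V, HasFDerivAt A ((fderiv ℝ om (H p)).comp (K p)) p := fun p hp =>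
    (homd (H p) (hHU p hp)).comp p (hHd p hp)
  -- the core derivative formula for q ↦ A q (K q w)
  have hΨ : ∀ p ∈ V, ∀ w : ℝ × E, HasFDerivAt (fun q => A q (K q w))
      ((A p).comp ((fderiv ℝ K p).flip w) +
        ((fderiv ℝ om (H p)).comp (K p)).flip (K p w)) p := by
    intro p hp w
    have h1 : HasFDerivAt (fun q => K q w) ((fderiv ℝ K p).flip w) p := by
      have := (hKd p hp).clm_apply (hasFDerivAt_const w p)
      simpa using this
    exact (hAd p hp).clm_apply h1
  -- symmetry of the second derivative of H
  have hsymm : ∀ p ∈ V, ∀ u w : ℝ × E, fderiv ℝ K p u w = fderiv ℝ K p w u := by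
    intro p hp u w
    exact ((hH.contDiffAt (hVopen.mem_nhds hp)).isSymmSndFDerivAt (by norm_num)) u w
  -- the candidate primitive
  set f : E → ℝ := fun x => - ∫ t in (0:ℝ)..1, g (t, x) with hfdef
  refine ⟨f, fun x hx => ?_⟩
  have hcurve : ∀ x : E, Continuous fun t : ℝ => ((t : ℝ), x) :=
    fun x => continuous_id.prodMk continuous_const
  have hmk : ∀ (t : ℝ) (y : E),
      HasFDerivAt (fun z : E => ((t:ℝ), z)) (ContinuousLinearMap.inr ℝ ℝ E) y := by
    intro t y
    have h2 := ((ContinuousLinearMap.inr ℝ ℝ E).hasFDerivAt (x := y)).const_add ((t:ℝ), (0:E))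
    have h3 : (fun z : E => ((t:ℝ),(0:E)) + (ContinuousLinearMap.inr ℝ ℝ E) z)
        = fun z : E => ((t:ℝ), z) := by
      funext z
      simp [Prod.ext_iff]
    rwa [h3] at h2
  -- derivative in t of the auxiliary function is G' applied
  have ht_deriv : ∀ v : E, ∀ t : ℝ,
      HasDerivAt (fun s : ℝ => A (s, x) (K (s, x) ((0:ℝ), v))) (G' (t, x) v) t := by
    intro v t
    have hp : (t, x) ∈ V := hVmem t hx
    have hc : HasDerivAt (fun s : ℝ => ((s:ℝ), x)) ((1:ℝ), (0:E)) t :=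
      (hasDerivAt_id t).prodMk (hasDerivAt_const t x)
    have h1 := (hΨ (t, x) hp ((0:ℝ), v)).comp_hasDerivAt t hc
    have h3 : fderiv ℝ g (t, x) =
        (A (t,x)).comp ((fderiv ℝ K (t,x)).flip ((1:ℝ),(0:E))) +
        ((fderiv ℝ om (H (t,x))).comp (K (t,x))).flip (K (t,x) ((1:ℝ),(0:E))) :=
      (hΨ (t,x) hp ((1:ℝ),(0:E))).fderiv
    have h4 : G' (t, x) v = A (t,x) (fderiv ℝ K (t,x) ((0:ℝ),v) ((1:ℝ),(0:E))) +
        fderiv ℝ om (H (t,x)) (K (t,x) ((0:ℝ),v)) (K (t,x) ((1:ℝ),(0:E))) := by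
      show (fderiv ℝ g (t,x)).comp (ContinuousLinearMap.inr ℝ ℝ E) v = _
      rw [h3]
      simp [ContinuousLinearMap.add_apply, ContinuousLinearMap.comp_apply,
        ContinuousLinearMap.flip_apply, ContinuousLinearMap.inr_apply]
    have h5 : G' (t,x) v = A (t,x) (fderiv ℝ K (t,x) ((1:ℝ),(0:E)) ((0:ℝ),v)) +
        fderiv ℝ om (H (t,x)) (K (t,x) ((1:ℝ),(0:E))) (K (t,x) ((0:ℝ),v)) := by
      rw [h4, hsymm (t,x) hp, hclosed (H (t,x)) (hHU _ hp)]
    rw [h5]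
    convert h1 using 1
    all_goals rfl
  -- fundamental theorem of calculus in t
  have hG'cont : ContinuousOn (fun t : ℝ => G' (t, x)) (Set.uIcc (0:ℝ) 1) := by
    apply hG'c.continuousOn.comp (hcurve x).continuousOn
    intro t _; exact hVmem t hx
  have hG'int : IntervalIntegrable (fun t : ℝ => G' (t, x)) volume 0 1 :=
    hG'cont.intervalIntegrable
  have hFTC : ∀ v : E, ∫ t in (0:ℝ)..1, G' (t, x) v =
      A (1, x) (K (1, x) ((0:ℝ), v)) - A (0, x) (K (0, x) ((0:ℝ), v)) := by
    intro v
    apply intervalIntegral.integral_eq_sub_of_hasDerivAt (fun t _ => ht_deriv v t)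
    exact (hG'cont.clm_apply continuousOn_const).intervalIntegrable
  -- endpoint values
  have hK0 : ∀ v : E, K (0, x) ((0:ℝ), v) = v := by
    have h1 : HasFDerivAt (fun y : E => H (0, y))
        ((K (0, x)).comp (ContinuousLinearMap.inr ℝ ℝ E)) x :=
      (hHd (0, x) (hVmem 0 hx)).comp x (hmk 0 x)
    have h2 : (fun y : E => H (0, y)) =ᶠ[𝓝 x] id :=
      Filter.eventuallyEq_of_mem (hU.mem_nhds hx) (fun y hy => hH0 y hy)
    have h3 : HasFDerivAt (id : E → E)
        ((K (0,x)).comp (ContinuousLinearMap.inr ℝ ℝ E)) x :=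
      h1.congr_of_eventuallyEq h2.symm
    have h4 := h3.unique (hasFDerivAt_id x)
    intro v
    have h5 := congrArg (fun (L : E →L[ℝ] E) => L v) h4
    simpa using h5
  have hK1 : ∀ v : E, K (1, x) ((0:ℝ), v) = 0 := by
    have h1 : HasFDerivAt (fun y : E => H (1, y))
        ((K (1, x)).comp (ContinuousLinearMap.inr ℝ ℝ E)) x :=
      (hHd (1, x) (hVmem 1 hx)).comp x (hmk 1 x)
    have h2 : (fun y : E => H (1, y)) =ᶠ[𝓝 x] (fun _ => x₀) :=
      Filter.eventuallyEq_of_mem (hU.mem_nhds hx) (fun y hy => hH1 y hy)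
    have h3 : HasFDerivAt (fun _ : E => x₀)
        ((K (1,x)).comp (ContinuousLinearMap.inr ℝ ℝ E)) x :=
      h1.congr_of_eventuallyEq h2.symm
    have h4 := h3.unique (hasFDerivAt_const x₀ x)
    intro v
    have h5 := congrArg (fun (L : E →L[ℝ] E) => L v) h4
    simpa using h5
  have hint_eq : (∫ t in (0:ℝ)..1, G' (t, x)) = - om x := by
    apply ContinuousLinearMap.ext
    intro v
    rw [ContinuousLinearMap.intervalIntegral_apply hG'int v, hFTC v, hK1 v, hK0 v]
    simp [hAdef, hH0 x hx]
  -- uniform bound on a compact neighbourhood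
  obtain ⟨ε, εpos, hball⟩ := Metric.isOpen_iff.mp hU x hx
  have hδpos : 0 < ε / 2 := by positivity
  have hclb : Metric.closedBall x (ε/2) ⊆ U := fun y hy =>
    hball (lt_of_le_of_lt (Metric.mem_closedBall.mp hy) (by linarith))
  have hS : IsCompact ((Set.uIcc (0:ℝ) 1) ×ˢ Metric.closedBall x (ε/2)) :=
    isCompact_uIcc.prod (isCompact_closedBall x (ε/2))
  have hSV : (Set.uIcc (0:ℝ) 1) ×ˢ Metric.closedBall x (ε/2) ⊆ V := fun p hp =>
    ⟨trivial, hclb hp.2⟩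
  obtain ⟨C, hC⟩ := hS.exists_bound_of_continuousOn (hG'c.continuousOn.mono hSV)
  have hIsub : Set.uIoc (0:ℝ) 1 ⊆ Set.uIcc (0:ℝ) 1 := Set.uIoc_subset_uIcc
  -- differentiation under the integral sign
  have main := intervalIntegral.hasFDerivAt_integral_of_dominated_of_fderiv_le
    (F := fun y t => g (t, y)) (F' := fun y t => G' (t, y)) (x₀ := x)
    (a := 0) (b := 1) (μ := volume) (bound := fun _ => C) (Metric.ball_mem_nhds x hδpos) ?meas ?int ?meas' ?bound ?bint ?diff
  case meas =>
    filter_upwards [hU.mem_nhds hx] with y hy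
    have hcont : ContinuousOn (fun t : ℝ => g (t, y)) (Set.uIoc (0:ℝ) 1) :=
      hgc.continuousOn.comp (hcurve y).continuousOn (fun t _ => hVmem t hy)
    exact hcont.aestronglyMeasurable measurableSet_uIoc
  case int =>
    exact (hgc.continuousOn.comp (hcurve x).continuousOn
      (fun t _ => hVmem t hx)).intervalIntegrable
  case meas' =>
    exact (hG'cont.mono hIsub).aestronglyMeasurable measurableSet_uIoc
  case bound =>
    refine Filter.Eventually.of_forall fun t ht y hy => ?_
    exact hC (t, y) ⟨hIsub ht, Metric.ball_subset_closedBall hy⟩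
  case bint => exact intervalIntegrable_const
  case diff =>
    refine Filter.Eventually.of_forall fun t ht y hy => ?_
    have hyU : y ∈ U := hclb (Metric.ball_subset_closedBall hy)
    have hp : (t, y) ∈ V := hVmem t hyU
    exact (hgd (t,y) hp).comp y (hmk t y)
  · -- conclude
    rw [hint_eq] at main
    have h6 := main.neg
    rw [neg_neg] at h6
    exact h6


end PoincareAux

/-- Poincaré lemma for 1-forms: on a smoothly contractible open set `U ⊆ ℝⁿ`
(there is a smooth homotopy inside `U` from the identity to a constant map),
every smooth closed 1-form `ω` is exact: `ω = df` for some smooth `f`. -/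
theorem poincare_lemma_one_forms (n : ℕ)
    (U : Set (EuclideanSpace ℝ (Fin n))) (hU : IsOpen U)
    (ω : EuclideanSpace ℝ (Fin n) → (EuclideanSpace ℝ (Fin n) →L[ℝ] ℝ))
    (hω : ContDiffOn ℝ (⊤ : ℕ∞) ω U)
    -- smooth contractibility of U: a smooth homotopy H : ℝ × U → U from id to a point x₀
    (hcontr : ∃ (x₀ : EuclideanSpace ℝ (Fin n)) (H : ℝ × EuclideanSpace ℝ (Fin n) →
        EuclideanSpace ℝ (Fin n)),
      x₀ ∈ U ∧
      ContDiffOn ℝ (⊤ : ℕ∞) H (Set.univ ×ˢ U) ∧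
      (∀ t x, x ∈ U → H (t, x) ∈ U) ∧
      (∀ x ∈ U, H (0, x) = x) ∧
      (∀ x ∈ U, H (1, x) = x₀))
    -- closedness: the exterior derivative dω vanishes on U
    (hclosed : ∀ x ∈ U, ∀ u v, fderiv ℝ ω x u v = fderiv ℝ ω x v u) :
    ∃ f : EuclideanSpace ℝ (Fin n) → ℝ,
      ContDiffOn ℝ (⊤ : ℕ∞) f U ∧ ∀ x ∈ U, fderiv ℝ f x = ω x := by
  obtain ⟨x₀, H, hx₀, hHsm, hHmaps, hH0, hH1⟩ := hcontr
  obtain ⟨f, hf⟩ := PoincareAux.exists_primitive hU (hω.of_le (by exact WithTop.coe_le_coe.mpr le_top)) hx₀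
    (hHsm.of_le (by exact WithTop.coe_le_coe.mpr le_top)) hHmaps hH0 hH1 hclosed
  have hAn : ContDiffOn ℝ (⊤ : ℕ∞) f U :=
    (contDiffOn_infty_iff_fderiv_of_isOpen hU).mpr
      ⟨fun x hx => (hf x hx).differentiableAt.differentiableWithinAt,
        hω.congr fun x hx => (hf x hx).fderiv⟩
  exact ⟨f, hAn, fun x hx => (hf x hx).fderiv⟩
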